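/- The linear map T : V → V defined by T(α,β) = (−α, β−α) preserves the metric g: for all X, Y ∈ V one has g(TX, TY) = g(X, Y). (This is the algebraic content, at the level of the differential, of the fact that φ₂(p,q) = (p⁻¹, q·p⁻¹) is an isometry of the pseudo-nearly Kähler SL(2,ℝ)×SL(2,ℝ).) -/

import Mathlib

open Matrix

/-- The indefinite inner product `⟨a,b⟩ = -(1/2)·Trace(adj(a)·b)` on 2×2 real matrices. -/
noncomputable def ip (a b : Matrix (Fin 2) (Fin 2) ℝ) : ℝ :=
  -(1/2 : ℝ) * (a.adjugate * b).trace

/-- The product metric `⟨(α,β),(γ,δ)⟩_E = ⟨α,γ⟩ + ⟨β,δ⟩`. -/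
noncomputable def ipE (X Y : Matrix (Fin 2) (Fin 2) ℝ × Matrix (Fin 2) (Fin 2) ℝ) : ℝ :=
  ip X.1 Y.1 + ip X.2 Y.2

/-- The nearly Kähler metric `g`. -/
noncomputable def g (X Y : Matrix (Fin 2) (Fin 2) ℝ × Matrix (Fin 2) (Fin 2) ℝ) : ℝ :=
  (2/3 : ℝ) * ipE X Y - (1/3 : ℝ) * ipE (X.2, X.1) Y

/-- The almost complex structure `J(α,β) = (1/√3)·(α − 2β, 2α − β)`. -/
noncomputable def Jmap (X : Matrix (Fin 2) (Fin 2) ℝ × Matrix (Fin 2) (Fin 2) ℝ) :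
    Matrix (Fin 2) (Fin 2) ℝ × Matrix (Fin 2) (Fin 2) ℝ :=
  (Real.sqrt 3)⁻¹ • (X.1 - (2:ℝ) • X.2, (2:ℝ) • X.1 - X.2)

/-- The almost product structure `P(α,β) = (β,α)`. -/
def Pmap (X : Matrix (Fin 2) (Fin 2) ℝ × Matrix (Fin 2) (Fin 2) ℝ) :
    Matrix (Fin 2) (Fin 2) ℝ × Matrix (Fin 2) (Fin 2) ℝ :=
  (X.2, X.1)

/-- The cross product `α×β = (1/2)(αβ − βα)` on `sl(2,ℝ)`. -/
noncomputable def cross (a b : Matrix (Fin 2) (Fin 2) ℝ) : Matrix (Fin 2) (Fin 2) ℝ :=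
  (1/2 : ℝ) • (a * b - b * a)

/-- The tensor `G`. -/
noncomputable def Gmap (X Y : Matrix (Fin 2) (Fin 2) ℝ × Matrix (Fin 2) (Fin 2) ℝ) :
    Matrix (Fin 2) (Fin 2) ℝ × Matrix (Fin 2) (Fin 2) ℝ :=
  (2 / (3 * Real.sqrt 3)) •
    (-(cross X.1 Y.1) - cross X.1 Y.2 + cross Y.1 X.2 + (2:ℝ) • cross X.2 Y.2,
     -((2:ℝ) • cross X.1 Y.1) + cross X.1 Y.2 - cross Y.1 X.2 + cross X.2 Y.2)

/-! In dimension two `adj a = tr a • 1 - a`, so `⟨a, b⟩ = ½ (tr (a b) - tr a · tr b)` is bilinear on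
all 2×2 matrices. Expanding `g (T X) (T Y)` by bilinearity then gives `g X Y` back. -/

theorem Matrix.adjugate_fin_two_eq_trace_smul_one_sub {R : Type*} [CommRing R]
    (A : Matrix (Fin 2) (Fin 2) R) : A.adjugate = A.trace • 1 - A := by
  ext i j
  fin_cases i <;> fin_cases j <;> simp [adjugate_fin_two, trace_fin_two]

theorem ip_eq_half_trace (a b : Matrix (Fin 2) (Fin 2) ℝ) :
    ip a b = (1 / 2) * ((a * b).trace - a.trace * b.trace) := by
  rw [ip, adjugate_fin_two_eq_trace_smul_one_sub, sub_mul, smul_mul, one_mul, trace_sub,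
    trace_smul, smul_eq_mul]
  ring

theorem ip_neg_left (a b : Matrix (Fin 2) (Fin 2) ℝ) : ip (-a) b = -ip a b := by
  simp only [ip_eq_half_trace, neg_mul, trace_neg]
  ring

theorem ip_neg_right (a b : Matrix (Fin 2) (Fin 2) ℝ) : ip a (-b) = -ip a b := by
  simp only [ip_eq_half_trace, mul_neg, trace_neg]
  ring

theorem ip_sub_left (a b c : Matrix (Fin 2) (Fin 2) ℝ) : ip (a - b) c = ip a c - ip b c := by
  simp only [ip_eq_half_trace, sub_mul, trace_sub]
  ring

theorem ip_sub_right (a b c : Matrix (Fin 2) (Fin 2) ℝ) : ip a (b - c) = ip a b - ip a c := by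
  simp only [ip_eq_half_trace, mul_sub, trace_sub]
  ring

theorem stmt_19_general
    (T : Matrix (Fin 2) (Fin 2) ℝ × Matrix (Fin 2) (Fin 2) ℝ →
      Matrix (Fin 2) (Fin 2) ℝ × Matrix (Fin 2) (Fin 2) ℝ)
    (hT : ∀ X, T X = (-X.1, X.2 - X.1))
    (X Y : Matrix (Fin 2) (Fin 2) ℝ × Matrix (Fin 2) (Fin 2) ℝ) :
    g (T X) (T Y) = g X Y := by
  simp only [hT, g, ipE, ip_neg_left, ip_neg_right, ip_sub_left, ip_sub_right]
  ring

/-- The differential of the isometry `φ₂(p,q) = (p⁻¹, q·p⁻¹)` preserves `g`. -/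
theorem stmt_19
    (T : Matrix (Fin 2) (Fin 2) ℝ × Matrix (Fin 2) (Fin 2) ℝ →
      Matrix (Fin 2) (Fin 2) ℝ × Matrix (Fin 2) (Fin 2) ℝ)
    (hT : ∀ X, T X = (-X.1, X.2 - X.1))
    (X Y : Matrix (Fin 2) (Fin 2) ℝ × Matrix (Fin 2) (Fin 2) ℝ)
    (hX1 : X.1.trace = 0) (hX2 : X.2.trace = 0)
    (hY1 : Y.1.trace = 0) (hY2 : Y.2.trace = 0) :
    g (T X) (T Y) = g X Y :=
  stmt_19_general T hT X Y
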